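/- (ψ-extension of Rota's umbral evaluation, formulas (2)-(3) and (L~).) Let L : K[X] → K be a K-linear functional such that L(∏_{i=0}^{k-1}(X − a(i))) = 1 for every natural number k. Then for every natural number n, L(X^n) = Σ_{k=0}^{n} S(n,k) = B~_n, the n-th generalized (ψ~-)Bell number. (For a(i) = i and K = ℝ this is Rota's theorem that L(X^n) is the n-th Bell number.) -/

import Mathlib

/-- Generalized (Comtet/ψ~-) Stirling numbers of the second kind associated with
the sequence `a`. -/
def genStirling {K : Type*} [CommRing K] (a : ℕ → K) : ℕ → ℕ → K
  | 0, 0 => 1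
  | 0, _ + 1 => 0
  | _ + 1, 0 => 0
  | n + 1, k + 1 => genStirling a n k + a (k + 1) * genStirling a n (k + 1)

lemma genStirling_eq_zero {K : Type*} [CommRing K] (a : ℕ → K) :
    ∀ n k : ℕ, n < k → genStirling a n k = 0 := by
  intro n
  induction n with
  | zero => intro k hk; match k, hk with
    | k + 1, _ => rfl
  | succ n ih =>
    intro k hk
    match k, hk with
    | k + 1, hk =>
      have h1 : n < k := Nat.lt_of_succ_lt_succ hk
      have h2 : n < k + 1 := Nat.lt_of_succ_lt hk
      simp [genStirling, ih k h1, ih (k + 1) h2]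

open Polynomial Finset in
lemma genStirling_key {K : Type*} [CommRing K] (a : ℕ → K) (ha : a 0 = 0) (n : ℕ) :
    (X ^ n : K[X]) = ∑ k ∈ range (n + 1),
      C (genStirling a n k) * ∏ i ∈ range k, (X - C (a i)) := by
  induction n with
  | zero => simp [genStirling]
  | succ n ih =>
    have hmul : ∀ k : ℕ, (X : K[X]) * ∏ i ∈ range k, (X - C (a i)) =
        (∏ i ∈ range (k + 1), (X - C (a i))) + C (a k) * ∏ i ∈ range k, (X - C (a i)) := by
      intro k
      rw [prod_range_succ]
      ring
    have hx : (X : K[X]) ^ (n + 1) = X * X ^ n := by ring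
    rw [hx, ih, Finset.mul_sum]
    have lhs_eq : ∑ k ∈ range (n + 1), (X : K[X]) * (C (genStirling a n k) *
          ∏ i ∈ range k, (X - C (a i)))
        = (∑ k ∈ range (n + 1), C (genStirling a n k) * ∏ i ∈ range (k + 1), (X - C (a i)))
          + ∑ k ∈ range (n + 1), C (a k * genStirling a n k) * ∏ i ∈ range k, (X - C (a i)) := by
      rw [← Finset.sum_add_distrib]
      refine Finset.sum_congr rfl fun k _ => ?_
      rw [mul_left_comm, hmul k]
      simp [map_mul]
      ring
    rw [lhs_eq]
    -- rewrite the second sum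
    have h2 : ∑ k ∈ range (n + 1), C (a k * genStirling a n k) * ∏ i ∈ range k, (X - C (a i))
        = ∑ k ∈ range (n + 1), C (a (k + 1) * genStirling a n (k + 1)) *
            ∏ i ∈ range (k + 1), (X - C (a i)) := by
      rw [Finset.sum_range_succ', Finset.sum_range_succ]
      simp [ha, genStirling_eq_zero a n (n + 1) (Nat.lt_succ_self n)]
    rw [h2, ← Finset.sum_add_distrib]
    rw [Finset.sum_range_succ' (fun k => C (genStirling a (n + 1) k) * ∏ i ∈ range k, (X - C (a i)))]
    have h0 : genStirling a (n + 1) 0 = 0 := rfl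
    simp only [h0, map_zero, zero_mul, add_zero]
    refine Finset.sum_congr rfl fun k _ => ?_
    show C (genStirling a n k) * _ + C (a (k + 1) * genStirling a n (k + 1)) * _
        = C (genStirling a (n + 1) (k + 1)) * _
    rw [show genStirling a (n + 1) (k + 1)
        = genStirling a n k + a (k + 1) * genStirling a n (k + 1) from rfl]
    simp [map_add]
    ring

/-- ψ-extension of Rota's umbral evaluation, formulas (2)-(3) and (L~):
if `L : K[X] → K` is a K-linear functional with `L(∏_{i<k}(X − a(i))) = 1` for all `k`,
then `L(X^n) = Σ_{k=0}^{n} S(n,k)`, the n-th generalized (ψ~-)Bell number. -/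
theorem psi_umbral_bell {K : Type*} [CommRing K] (a : ℕ → K) (ha : a 0 = 0)
    (L : Polynomial K →ₗ[K] K)
    (hL : ∀ k : ℕ, L (∏ i ∈ Finset.range k, (Polynomial.X - Polynomial.C (a i))) = 1)
    (n : ℕ) :
    L (Polynomial.X ^ n) = ∑ k ∈ Finset.range (n + 1), genStirling a n k := by
  rw [genStirling_key a ha n, map_sum]
  refine Finset.sum_congr rfl fun k _ => ?_
  rw [← Polynomial.smul_eq_C_mul, map_smul, hL k, smul_eq_mul, mul_one]
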